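/- Under the k-stage group testing strategy kSG(u1,...,uk), the expected number of tests per individual equals 1/u1 + Σ_{ℓ=1}^{k-1} (1 - (1-p)^{u_ℓ})/u_{ℓ+1}, and the expected cost per individual equals b(1 - p - (1-p)^{u_k}). -/

import Mathlib

/-!
Each quantity is a finite sum of constants weighted by probabilities of events about the
statuses of the first `m` members of the top-level group, where `m ≤ u_1` by the nesting
`u_{ℓ+1} ∣ u_ℓ`. Under the i.i.d. Bernoulli(p)
product measure, "all of the first `m` are healthy" has probability `(1-p)^m`, since that
event is a box; "the stage-`ℓ+1` group is positive" is its complement. A misclassification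
can only be a false positive, because the tracked individual belongs to its own stage-`k`
group; so the cost is `b` times the probability that the individual is healthy while its
stage-`k` group is not, which is `(1-p) - (1-p)^{u_k}`.
-/

open MeasureTheory Finset
open scoped ENNReal NNReal

theorem dvd_apply_zero_of_forall_succ_dvd {k : ℕ} {u : ℕ → ℕ}
    (hdvd : ∀ ℓ, ℓ + 1 < k → u (ℓ + 1) ∣ u ℓ) : ∀ ℓ < k, u ℓ ∣ u 0
  | 0, _ => dvd_rfl
  | ℓ + 1, hℓ => (hdvd ℓ hℓ).trans (dvd_apply_zero_of_forall_succ_dvd hdvd ℓ (by omega))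

namespace MeasureTheory

theorem lintegral_ite_const_zero {α : Type*} [MeasurableSpace α] (μ : Measure α)
    {P : α → Prop} [DecidablePred P] (hP : MeasurableSet {x | P x}) (a : ℝ≥0∞) :
    ∫⁻ x, (if P x then a else 0) ∂μ = a * μ {x | P x} := by
  simp_rw [← lintegral_indicator_const hP, Set.indicator_apply, Set.mem_ofPred_eq]

namespace Measure

variable {ι α : Type*} [Fintype ι] [MeasurableSpace α] (ν : Measure α) [IsProbabilityMeasure ν]

theorem pi_setOf_forall_imp_mem (P : ι → Prop) [DecidablePred P] (t : Set α) :
    Measure.pi (fun _ : ι => ν) {x | ∀ i, P i → x i ∈ t} = ν t ^ #{i | P i} := by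
  have hbox : {x : ι → α | ∀ i, P i → x i ∈ t} =
      Set.univ.pi fun i => if P i then t else Set.univ := by
    ext x
    simp only [Set.mem_ofPred_eq, Set.mem_pi, Set.mem_univ, true_imp_iff]
    exact forall_congr' fun i => by split_ifs <;> simp [*]
  simp only [hbox, pi_pi, apply_ite ν, measure_univ, prod_ite, prod_const_one, mul_one,
    prod_const]

end Measure

end MeasureTheory

theorem PMF.toMeasure_bernoulli_false (q : ℝ≥0) (hq : q ≤ 1) :
    (PMF.bernoulli q hq).toMeasure {false} = 1 - q := by
  rw [toMeasure_apply_singleton _ _ (measurableSet_singleton _), bernoulli_apply]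
  simp [ENNReal.coe_sub]

section BernoulliProduct

variable (q : ℝ≥0) (hq : q ≤ 1) {n m : ℕ}

theorem bernoulli_pi_forall_lt_false (hmn : m ≤ n) :
    Measure.pi (fun _ : Fin n => (PMF.bernoulli q hq).toMeasure)
      {x | ∀ j : Fin n, (j : ℕ) < m → x j = false} = (1 - q) ^ m :=
  (Measure.pi_setOf_forall_imp_mem _ (fun j : Fin n => (j : ℕ) < m) {false}).trans <| by
    rw [PMF.toMeasure_bernoulli_false, Fin.card_filter_val_lt, min_eq_right hmn]

theorem bernoulli_pi_exists_lt_true (hmn : m ≤ n) :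
    Measure.pi (fun _ : Fin n => (PMF.bernoulli q hq).toMeasure)
      {x | ∃ j : Fin n, (j : ℕ) < m ∧ x j = true} = 1 - (1 - q) ^ m := by
  have hcompl : {x : Fin n → Bool | ∃ j : Fin n, (j : ℕ) < m ∧ x j = true} =
      {x | ∀ j : Fin n, (j : ℕ) < m → x j = false}ᶜ := by
    ext x; simp
  rw [hcompl, prob_compl_eq_one_sub MeasurableSet.of_discrete,
    bernoulli_pi_forall_lt_false q hq hmn]

theorem bernoulli_pi_false_and_exists_lt_true (hmn : m ≤ n) (i : Fin n) (hi : (i : ℕ) < m) :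
    Measure.pi (fun _ : Fin n => (PMF.bernoulli q hq).toMeasure)
      {x | x i = false ∧ ∃ j : Fin n, (j : ℕ) < m ∧ x j = true} = (1 - q) - (1 - q) ^ m := by
  have hdiff : {x : Fin n → Bool | x i = false ∧ ∃ j : Fin n, (j : ℕ) < m ∧ x j = true} =
      {x | ∀ j, j = i → x j = false} \ {x | ∀ j : Fin n, (j : ℕ) < m → x j = false} := by
    ext x; simp
  have hsub : {x : Fin n → Bool | ∀ j : Fin n, (j : ℕ) < m → x j = false} ⊆
      {x | ∀ j, j = i → x j = false} := fun x hx j hj => hx j (hj ▸ hi)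
  have hfalse : Measure.pi (fun _ : Fin n => (PMF.bernoulli q hq).toMeasure)
      {x | ∀ j, j = i → x j = false} = 1 - q :=
    (Measure.pi_setOf_forall_imp_mem _ (· = i) {false}).trans <| by
      rw [PMF.toMeasure_bernoulli_false, filter_eq', if_pos (mem_univ _), card_singleton, pow_one]
  rw [hdiff, measure_sdiff hsub MeasurableSet.of_discrete.nullMeasurableSet (measure_ne_top _ _),
    hfalse, bernoulli_pi_forall_lt_false q hq hmn]

end BernoulliProduct
/-- Under kSG(u 0, …, u (k-1)) with nested group sizes
(`u (ℓ+1) ∣ u ℓ`), i.i.d. Bernoulli(p) infection statuses, false-positive cost `b`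
and false-negative cost `c`.  We track a fixed individual (index 0) inside one
top-level group of size `u 0`; its stage-(ℓ+1) group consists of the indices
`j < u ℓ` (wlog, by the nested structure).  The individual is declared infected iff
its stage-k group (of size `u (k-1)`) tests positive.
(i) The expected number of tests per individual is
    `1/(u 0) + ∑_{ℓ=0}^{k-2} (1-(1-p)^{u ℓ})/(u (ℓ+1))`
    (at stage ℓ+2 the individual contributes `1/(u (ℓ+1))` tests iff its
    stage-(ℓ+1) group, of size `u ℓ`, is positive).
(ii) The expected cost per individual is `b * (1 - p - (1-p)^{u (k-1)})`. -/
theorem kSG_expected_rate_and_cost (k : ℕ) (hk : 1 ≤ k) (u : ℕ → ℕ)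
    (hu : ∀ ℓ < k, 0 < u ℓ) (hdvd : ∀ ℓ, ℓ + 1 < k → u (ℓ + 1) ∣ u ℓ)
    (p : ℝ≥0∞) (hple : p ≤ 1)
    (b c : ℝ≥0∞) :
    (∫⁻ x : Fin (u 0) → Bool,
        (1 / (u 0 : ℝ≥0∞) +
          ∑ ℓ ∈ Finset.range (k - 1),
            if ∃ j : Fin (u 0), (j : ℕ) < u ℓ ∧ x j = true
            then 1 / (u (ℓ + 1) : ℝ≥0∞) else 0)
      ∂(Measure.pi fun _ : Fin (u 0) => (PMF.bernoulli p.toNNReal (by simpa using ENNReal.toNNReal_mono ENNReal.one_ne_top hple)).toMeasure))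
      = 1 / (u 0 : ℝ≥0∞) +
          ∑ ℓ ∈ Finset.range (k - 1), (1 - (1 - p) ^ (u ℓ)) / (u (ℓ + 1) : ℝ≥0∞)
    ∧
    (∫⁻ x : Fin (u 0) → Bool,
        (if x ⟨0, hu 0 (Nat.lt_of_lt_of_le Nat.zero_lt_one hk)⟩ = false ∧
            (∃ j : Fin (u 0), (j : ℕ) < u (k - 1) ∧ x j = true) then b
         else if x ⟨0, hu 0 (Nat.lt_of_lt_of_le Nat.zero_lt_one hk)⟩ = true ∧
            ¬(∃ j : Fin (u 0), (j : ℕ) < u (k - 1) ∧ x j = true) then c else 0)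
      ∂(Measure.pi fun _ : Fin (u 0) => (PMF.bernoulli p.toNNReal (by simpa using ENNReal.toNNReal_mono ENNReal.one_ne_top hple)).toMeasure))
      = b * (1 - p - (1 - p) ^ (u (k - 1))) := by
  have hp : ((p.toNNReal : ℝ≥0) : ℝ≥0∞) = p :=
    ENNReal.coe_toNNReal (ne_top_of_le_ne_top ENNReal.one_ne_top hple)
  have hq : p.toNNReal ≤ 1 := by
    simpa using ENNReal.toNNReal_mono ENNReal.one_ne_top hple
  have hsize : ∀ ℓ < k, u ℓ ≤ u 0 := fun ℓ hℓ =>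
    Nat.le_of_dvd (hu 0 hk) (dvd_apply_zero_of_forall_succ_dvd hdvd ℓ hℓ)
  constructor
  · rw [lintegral_add_left measurable_const, lintegral_const, measure_univ, mul_one,
      lintegral_finsetSum _ fun _ _ => Measurable.of_discrete]
    refine congrArg _ (sum_congr rfl fun ℓ hℓ => ?_)
    rw [lintegral_ite_const_zero _ MeasurableSet.of_discrete,
      bernoulli_pi_exists_lt_true _ hq (hsize ℓ (by grind)), hp, one_div,
      ENNReal.div_eq_inv_mul]
  · have hm : 0 < u (k - 1) := hu (k - 1) (by omega)
    have hno_false_negative : ∀ x : Fin (u 0) → Bool, ¬(x ⟨0, hu 0 hk⟩ = true ∧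
        ¬∃ j : Fin (u 0), (j : ℕ) < u (k - 1) ∧ x j = true) :=
      fun x ⟨hx, hne⟩ => hne ⟨_, hm, hx⟩
    simp only [hno_false_negative, if_false]
    rw [lintegral_ite_const_zero _ MeasurableSet.of_discrete,
      bernoulli_pi_false_and_exists_lt_true _ hq (hsize (k - 1) (by omega)) ⟨0, hu 0 hk⟩ hm, hp]
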